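/- Let (c_Δ) be a translation-covariant Feller system of jump rates, let (ν_n) be Borel probability measures on Ω converging weakly to ν, and let (Φ_n), Φ be translation-invariant potentials with ‖Φ‖ < ∞ and ‖Φ_n − Φ‖ → 0. Then ⟨ν_n, Φ_n⟩_L → ⟨ν, Φ⟩_L; that is, the pairing (ν,Φ) ↦ ⟨ν,Φ⟩_L is jointly continuous with respect to the weak topology on probability measures and the ‖·‖-topology on translation-invariant potentials. -/

import Mathlib

open MeasureTheory Filter Topology

/-- The lattice `ℤ^d`. -/
abbrev Zd (d : ℕ) := Fin d → ℤ

/-- The configuration space `Ω = {1,…,q}^{ℤ^d}`. -/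
abbrev Conf (d q : ℕ) := Zd d → Fin q

variable {d q : ℕ}

/-- The shift `θ_i`, `(θ_i σ)(j) = σ(j+i)`. -/
def shift (i : Zd d) (σ : Conf d q) : Conf d q := fun j => σ (j + i)

/-- An interaction potential: a family `Φ_A : Ω → ℝ` indexed by finite `A ⊂ ℤ^d`. -/
abbrev Pot (d q : ℕ) := Finset (Zd d) → Conf d q → ℝ

/-- A translation-invariant potential: each `Φ_A` is continuous, depends only on the
coordinates in `A`, and `Φ_{A+i} = Φ_A ∘ θ_i`. -/
structure IsPotential (Φ : Pot d q) : Prop where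
  continuous : ∀ A, Continuous (Φ A)
  isLocal : ∀ (A : Finset (Zd d)) (σ τ : Conf d q), (∀ j ∈ A, σ j = τ j) → Φ A σ = Φ A τ
  shiftCov : ∀ (A : Finset (Zd d)) (i : Zd d) (σ : Conf d q),
    Φ (A.image (· + i)) σ = Φ A (shift i σ)

/-- sup norm `‖f‖_∞` of a function on the (compact) configuration space. -/
noncomputable def supnorm (f : Conf d q → ℝ) : ℝ := ⨆ σ, |f σ|

/-- Summability of `Σ_{A∋0} ‖Φ_A‖_∞` (finiteness of `‖Φ‖`). -/
def PNormSummable (Φ : Pot d q) : Prop :=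
  Summable fun A : {A : Finset (Zd d) // (0 : Zd d) ∈ A} => supnorm (Φ A.1)

/-- The norm `‖Φ‖ = Σ_{A∋0} ‖Φ_A‖_∞`. -/
noncomputable def pnorm (Φ : Pot d q) : ℝ :=
  ∑' A : {A : Finset (Zd d) // (0 : Zd d) ∈ A}, supnorm (Φ A.1)

/-- The norm `‖Φ‖₀ = Σ_{A∋0} |A|⁻¹ ‖Φ_A‖_∞`. -/
noncomputable def pnorm0 (Φ : Pot d q) : ℝ :=
  ∑' A : {A : Finset (Zd d) // (0 : Zd d) ∈ A}, (A.1.card : ℝ)⁻¹ * supnorm (Φ A.1)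

/-- A translation-covariant Feller system of jump rates, modelled through the weights
`c_Δ(η, {ζ_Δ})` of the finite Borel measures `c_Δ(η,·)` on the finite discrete space
`{1,…,q}^Δ`: `η ↦ c_Δ(η,·)` is (weakly) continuous, the family is shift-covariant,
and `Σ_{Δ∋0} c̄_Δ < ∞` where `c̄_Δ = sup_η c_Δ(η, {1,…,q}^Δ)`. -/
structure JumpRates (d q : ℕ) : Type where
  /-- the weight `c_Δ(η, {ζ_Δ})` -/
  c : (Δ : Finset (Zd d)) → Conf d q → (↥Δ → Fin q) → NNReal
  feller : ∀ (Δ : Finset (Zd d)) (ζ : Δ → Fin q), Continuous fun η => c Δ η ζ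
  shiftCov : ∀ (i : Zd d) (Δ : Finset (Zd d)) (η : Conf d q)
      (ζ : ↥(Δ.image (· + i)) → Fin q),
    c (Δ.image (· + i)) η ζ
      = c Δ (shift i η) (fun j => ζ ⟨j.1 + i, Finset.mem_image_of_mem _ j.2⟩)
  cbar_summable : Summable fun Δ : {Δ : Finset (Zd d) // (0 : Zd d) ∈ Δ} =>
    ⨆ η : Conf d q, ∑ ζ : ↥Δ.1 → Fin q, (c Δ.1 η ζ : ℝ)

/-- `c̄_Δ = sup_η c_Δ(η, {1,…,q}^Δ)`. -/
noncomputable def cbar (R : JumpRates d q) (Δ : Finset (Zd d)) : ℝ :=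
  ⨆ η : Conf d q, ∑ ζ : Δ → Fin q, (R.c Δ η ζ : ℝ)

/-- `Σ_{Δ∋0} c̄_Δ`. -/
noncomputable def cbarSum (R : JumpRates d q) : ℝ :=
  ∑' Δ : {Δ : Finset (Zd d) // (0 : Zd d) ∈ Δ}, cbar R Δ.1

/-- The configuration `ζ_Δ η_{Δ^c}`: equal to `ζ` on `Δ` and to `η` off `Δ`. -/
def patch (Δ : Finset (Zd d)) (ζ : Δ → Fin q) (η : Conf d q) : Conf d q :=
  fun j => if h : j ∈ Δ then ζ ⟨j, h⟩ else η j

/-- The `Δ`-term of the function `F_{L,Φ}`: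
`|Δ|⁻¹ ∫ c_Δ(η,dζ_Δ) Σ_{A∩Δ≠∅} [Φ_A(ζ_Δη_{Δ^c}) − Φ_A(η)]`. -/
noncomputable def termL (R : JumpRates d q) (Φ : Pot d q) (Δ : Finset (Zd d))
    (η : Conf d q) : ℝ :=
  (Δ.card : ℝ)⁻¹ * ∑ ζ : Δ → Fin q, (R.c Δ η ζ : ℝ) *
    ∑' A : {A : Finset (Zd d) // (A ∩ Δ).Nonempty}, (Φ A.1 (patch Δ ζ η) - Φ A.1 η)

/-- The function `F_{L,Φ}(η) = Σ_{Δ∋0} |Δ|⁻¹ ∫ c_Δ(η,dζ_Δ) Σ_{A∩Δ≠∅} [Φ_A(ζ_Δη_{Δ^c}) − Φ_A(η)]`. -/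
noncomputable def FL (R : JumpRates d q) (Φ : Pot d q) (η : Conf d q) : ℝ :=
  ∑' Δ : {Δ : Finset (Zd d) // (0 : Zd d) ∈ Δ}, termL R Φ Δ.1 η

/-- The pairing `⟨ν,Φ⟩_L`. -/
noncomputable def pairingL (R : JumpRates d q) (Φ : Pot d q) (ν : Measure (Conf d q)) : ℝ :=
  ∫ η, FL R Φ η ∂ν

/-
By translation invariance, the sets `A` meeting a finite `Δ` are covered by `|Δ|` translates of
the sets through `0`, so `Σ_{A∩Δ≠∅} ‖Φ_A‖_∞ ≤ |Δ| ‖Φ‖`. Hence the `Δ`-term of `F_{L,Φ}` is at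
most `2 c̄_Δ ‖Φ‖`, and `F_{L,Φ}` is a continuous function, additive in `Φ`, with
`‖F_{L,Φ}‖_∞ ≤ 2 (Σ_{Δ∋0} c̄_Δ) ‖Φ‖`. Now split
`⟨ν_n, Φ_n⟩_L = ⟨ν_n, Φ_n − Φ⟩_L + ∫ F_{L,Φ} dν_n`: the first term is at most
`2 (Σ c̄_Δ) ‖Φ_n − Φ‖ → 0`, and the second converges by weak convergence of `ν_n`.
-/

section TranslationInvariantSums

variable {G : Type*} [DecidableEq G]

noncomputable def sigmaMemOfInterNonempty {Δ : Finset G}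
    (A : {A : Finset G // (A ∩ Δ).Nonempty}) : Σ j : Δ, {B : Finset G // j.1 ∈ B} :=
  ⟨⟨A.2.choose, (Finset.mem_inter.mp A.2.choose_spec).2⟩,
    ⟨A.1, (Finset.mem_inter.mp A.2.choose_spec).1⟩⟩

lemma sigmaMemOfInterNonempty_injective {Δ : Finset G} :
    Function.Injective (sigmaMemOfInterNonempty (Δ := Δ)) := fun _ _ h =>
  Subtype.ext (congrArg (fun p : Σ j : Δ, {B : Finset G // j.1 ∈ B} => p.2.1) h)

variable [AddGroup G]

def memZeroEquivMem (j : G) : {A : Finset G // 0 ∈ A} ≃ {A : Finset G // j ∈ A} :=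
  (Equiv.finsetCongr (Equiv.addRight j)).subtypeEquiv fun A => by simp

variable {f : Finset G → ℝ}

lemma memZeroEquivMem_comp (hf : ∀ A i, f (A.image (· + i)) = f A) (j : G) :
    (fun A : {A : Finset G // j ∈ A} => f A.1) ∘ memZeroEquivMem j = fun A => f A.1 := by
  funext A
  simp only [Function.comp_apply, memZeroEquivMem, Equiv.subtypeEquiv_apply,
    Equiv.finsetCongr_apply, Finset.map_eq_image, Equiv.coe_toEmbedding, Equiv.coe_addRight]
  exact hf _ _

lemma summable_mem_of_translation_invariant (hf : ∀ A i, f (A.image (· + i)) = f A)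
    (hs : Summable fun A : {A : Finset G // 0 ∈ A} => f A.1) (j : G) :
    Summable fun A : {A : Finset G // j ∈ A} => f A.1 := by
  rwa [← (memZeroEquivMem j).summable_iff, memZeroEquivMem_comp hf]

lemma tsum_mem_of_translation_invariant (hf : ∀ A i, f (A.image (· + i)) = f A) (j : G) :
    ∑' A : {A : Finset G // j ∈ A}, f A.1 = ∑' A : {A : Finset G // 0 ∈ A}, f A.1 := by
  rw [← (memZeroEquivMem j).tsum_eq, ← memZeroEquivMem_comp hf j]
  rfl

variable (hf0 : ∀ A, 0 ≤ f A) (hf : ∀ A i, f (A.image (· + i)) = f A)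
  (hs : Summable fun A : {A : Finset G // 0 ∈ A} => f A.1)
include hf0 hf hs

lemma summable_sigma_mem (Δ : Finset G) :
    Summable fun p : Σ j : Δ, {B : Finset G // j.1 ∈ B} => f p.2.1 :=
  (summable_sigma_of_nonneg fun _ => hf0 _).mpr
    ⟨fun j => summable_mem_of_translation_invariant hf hs j.1, .of_finite⟩

lemma summable_inter_nonempty (Δ : Finset G) :
    Summable fun A : {A : Finset G // (A ∩ Δ).Nonempty} => f A.1 :=
  (summable_sigma_mem hf0 hf hs Δ).comp_injective sigmaMemOfInterNonempty_injective

lemma tsum_inter_nonempty_le (Δ : Finset G) :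
    ∑' A : {A : Finset G // (A ∩ Δ).Nonempty}, f A.1
      ≤ Δ.card * ∑' A : {A : Finset G // 0 ∈ A}, f A.1 := by
  calc ∑' A : {A : Finset G // (A ∩ Δ).Nonempty}, f A.1
      ≤ ∑' p : Σ j : Δ, {B : Finset G // j.1 ∈ B}, f p.2.1 :=
        Summable.tsum_le_tsum_of_inj _ sigmaMemOfInterNonempty_injective (fun _ _ => hf0 _)
          (fun _ => le_rfl) (summable_inter_nonempty hf0 hf hs Δ)
          (summable_sigma_mem hf0 hf hs Δ)
    _ = ∑' j : Δ, ∑' B : {B : Finset G // j.1 ∈ B}, f B.1 :=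
        (summable_sigma_mem hf0 hf hs Δ).tsum_sigma
    _ = Δ.card * ∑' A : {A : Finset G // 0 ∈ A}, f A.1 := by
        simp [tsum_mem_of_translation_invariant hf]

end TranslationInvariantSums

section Potentials

variable {Φ Ψ : Pot d q}

lemma supnorm_nonneg (f : Conf d q → ℝ) : 0 ≤ supnorm f :=
  Real.iSup_nonneg fun _ => abs_nonneg _

lemma abs_le_supnorm {f : Conf d q → ℝ} (hf : Continuous f) (σ : Conf d q) :
    |f σ| ≤ supnorm f :=
  le_ciSup (isCompact_range hf.abs).bddAbove σ

lemma pnorm_nonneg (Φ : Pot d q) : 0 ≤ pnorm Φ :=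
  tsum_nonneg fun _ => supnorm_nonneg _

lemma shift_surjective (i : Zd d) : Function.Surjective (shift (q := q) i) := by
  intro σ
  exact ⟨shift (-i) σ, funext fun j => by simp [shift]⟩

lemma IsPotential.supnorm_image_add (hΦ : IsPotential Φ) (A : Finset (Zd d)) (i : Zd d) :
    supnorm (Φ (A.image (· + i))) = supnorm (Φ A) := by
  simp only [supnorm, hΦ.shiftCov]
  exact (shift_surjective i).iSup_comp fun σ => |Φ A σ|

lemma IsPotential.sub (hΦ : IsPotential Φ) (hΨ : IsPotential Ψ) : IsPotential (Φ - Ψ) where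
  continuous A := (hΦ.continuous A).sub (hΨ.continuous A)
  isLocal A σ τ h := by simp only [Pi.sub_apply, hΦ.isLocal A σ τ h, hΨ.isLocal A σ τ h]
  shiftCov A i σ := by simp only [Pi.sub_apply, hΦ.shiftCov, hΨ.shiftCov]

lemma IsPotential.norm_sub_le (hΦ : IsPotential Φ) (A : Finset (Zd d)) (σ τ : Conf d q) :
    ‖Φ A σ - Φ A τ‖ ≤ 2 * supnorm (Φ A) := by
  have hσ := abs_le_supnorm (hΦ.continuous A) σ
  have hτ := abs_le_supnorm (hΦ.continuous A) τ
  rw [Real.norm_eq_abs]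
  linarith [abs_sub (Φ A σ) (Φ A τ)]

variable (hΦ : IsPotential Φ) (hs : PNormSummable Φ)
include hΦ hs

lemma IsPotential.summable_inter_nonempty (Δ : Finset (Zd d)) :
    Summable fun A : {A : Finset (Zd d) // (A ∩ Δ).Nonempty} => supnorm (Φ A.1) :=
  _root_.summable_inter_nonempty (fun _ => supnorm_nonneg _) hΦ.supnorm_image_add hs Δ

lemma IsPotential.tsum_inter_nonempty_le (Δ : Finset (Zd d)) :
    ∑' A : {A : Finset (Zd d) // (A ∩ Δ).Nonempty}, supnorm (Φ A.1) ≤ Δ.card * pnorm Φ :=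
  _root_.tsum_inter_nonempty_le (fun _ => supnorm_nonneg _) hΦ.supnorm_image_add hs Δ

end Potentials

noncomputable def energyChange (Φ : Pot d q) (Δ : Finset (Zd d)) (ζ : Δ → Fin q)
    (η : Conf d q) : ℝ :=
  ∑' A : {A : Finset (Zd d) // (A ∩ Δ).Nonempty}, (Φ A.1 (patch Δ ζ η) - Φ A.1 η)

lemma continuous_patch (Δ : Finset (Zd d)) (ζ : Δ → Fin q) :
    Continuous fun η : Conf d q => patch Δ ζ η := by
  refine continuous_pi fun j => ?_
  by_cases h : j ∈ Δ
  · simpa only [patch, dif_pos h] using continuous_const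
  · simpa only [patch, dif_neg h] using continuous_apply j

section EnergyChange

variable {Φ Ψ : Pot d q} (hΦ : IsPotential Φ) (hs : PNormSummable Φ)
include hΦ hs

lemma summable_energyChange_terms (Δ : Finset (Zd d)) (ζ : Δ → Fin q) (η : Conf d q) :
    Summable fun A : {A : Finset (Zd d) // (A ∩ Δ).Nonempty} =>
      Φ A.1 (patch Δ ζ η) - Φ A.1 η :=
  .of_norm_bounded ((hΦ.summable_inter_nonempty hs Δ).mul_left 2)
    fun A => hΦ.norm_sub_le A.1 _ _

lemma abs_energyChange_le (Δ : Finset (Zd d)) (ζ : Δ → Fin q) (η : Conf d q) :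
    |energyChange Φ Δ ζ η| ≤ 2 * (Δ.card * pnorm Φ) := by
  have hsum := ((hΦ.summable_inter_nonempty hs Δ).mul_left 2).hasSum
  refine (tsum_of_norm_bounded hsum fun A => hΦ.norm_sub_le A.1 _ _).trans ?_
  rw [tsum_mul_left]
  gcongr
  exact hΦ.tsum_inter_nonempty_le hs Δ

lemma continuous_energyChange (Δ : Finset (Zd d)) (ζ : Δ → Fin q) :
    Continuous (energyChange Φ Δ ζ) :=
  continuous_tsum
    (fun A => ((hΦ.continuous A.1).comp (continuous_patch Δ ζ)).sub (hΦ.continuous A.1))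
    ((hΦ.summable_inter_nonempty hs Δ).mul_left 2) fun A _ => hΦ.norm_sub_le A.1 _ _

lemma energyChange_add (hΨ : IsPotential Ψ) (hsΨ : PNormSummable Ψ) (Δ : Finset (Zd d))
    (ζ : Δ → Fin q) (η : Conf d q) :
    energyChange (Φ + Ψ) Δ ζ η = energyChange Φ Δ ζ η + energyChange Ψ Δ ζ η := by
  rw [energyChange, energyChange, energyChange, ← (summable_energyChange_terms hΦ hs Δ ζ η).tsum_add
    (summable_energyChange_terms hΨ hsΨ Δ ζ η)]
  exact tsum_congr fun A => by simp only [Pi.add_apply]; ring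

end EnergyChange

namespace JumpRates

variable (R : JumpRates d q)

lemma continuous_sum_c (Δ : Finset (Zd d)) :
    Continuous fun η => ∑ ζ : Δ → Fin q, (R.c Δ η ζ : ℝ) :=
  continuous_finsetSum _ fun ζ _ => NNReal.continuous_coe.comp (R.feller Δ ζ)

lemma sum_c_le_cbar (Δ : Finset (Zd d)) (η : Conf d q) :
    ∑ ζ : Δ → Fin q, (R.c Δ η ζ : ℝ) ≤ cbar R Δ :=
  le_ciSup (isCompact_range (R.continuous_sum_c Δ)).bddAbove η

end JumpRates

lemma termL_eq (R : JumpRates d q) (Φ : Pot d q) (Δ : Finset (Zd d)) (η : Conf d q) :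
    termL R Φ Δ η = (Δ.card : ℝ)⁻¹ * ∑ ζ : Δ → Fin q, (R.c Δ η ζ : ℝ) * energyChange Φ Δ ζ η :=
  rfl

section Pairing

variable (R : JumpRates d q) {Φ Ψ : Pot d q} (hΦ : IsPotential Φ) (hs : PNormSummable Φ)
include hΦ hs

lemma abs_termL_le (Δ : Finset (Zd d)) (η : Conf d q) :
    |termL R Φ Δ η| ≤ cbar R Δ * (2 * pnorm Φ) := by
  set S := ∑ ζ : Δ → Fin q, (R.c Δ η ζ : ℝ)
  have hsum : |∑ ζ : Δ → Fin q, (R.c Δ η ζ : ℝ) * energyChange Φ Δ ζ η|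
      ≤ S * (2 * (Δ.card * pnorm Φ)) := by
    rw [Finset.sum_mul]
    refine (Finset.abs_sum_le_sum_abs _ _).trans (Finset.sum_le_sum fun ζ _ => ?_)
    rw [abs_mul, NNReal.abs_eq]
    exact mul_le_mul_of_nonneg_left (abs_energyChange_le hΦ hs Δ ζ η) (R.c Δ η ζ).coe_nonneg
  have hcard : (Δ.card : ℝ)⁻¹ * Δ.card ≤ 1 := inv_mul_le_one_of_le₀ le_rfl (Nat.cast_nonneg _)
  have hS : 0 ≤ S := Finset.sum_nonneg fun ζ _ => (R.c Δ η ζ).coe_nonneg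
  have hΦ0 := pnorm_nonneg Φ
  calc |termL R Φ Δ η|
      = (Δ.card : ℝ)⁻¹ * |∑ ζ : Δ → Fin q, (R.c Δ η ζ : ℝ) * energyChange Φ Δ ζ η| := by
        rw [termL_eq, abs_mul, abs_inv, Nat.abs_cast]
    _ ≤ (Δ.card : ℝ)⁻¹ * (S * (2 * (Δ.card * pnorm Φ))) := by gcongr
    _ = ((Δ.card : ℝ)⁻¹ * Δ.card) * (S * (2 * pnorm Φ)) := by ring
    _ ≤ S * (2 * pnorm Φ) := mul_le_of_le_one_left (by positivity) hcard
    _ ≤ cbar R Δ * (2 * pnorm Φ) := by gcongr; exact R.sum_c_le_cbar Δ η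

lemma continuous_termL (Δ : Finset (Zd d)) : Continuous (termL R Φ Δ) :=
  continuous_const.mul (continuous_finsetSum _ fun ζ _ =>
    (NNReal.continuous_coe.comp (R.feller Δ ζ)).mul (continuous_energyChange hΦ hs Δ ζ))

lemma termL_add (hΨ : IsPotential Ψ) (hsΨ : PNormSummable Ψ) (Δ : Finset (Zd d))
    (η : Conf d q) : termL R (Φ + Ψ) Δ η = termL R Φ Δ η + termL R Ψ Δ η := by
  simp only [termL_eq, energyChange_add hΦ hs hΨ hsΨ, mul_add, Finset.sum_add_distrib]

lemma summable_termL (η : Conf d q) :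
    Summable fun Δ : {Δ : Finset (Zd d) // 0 ∈ Δ} => termL R Φ Δ.1 η :=
  .of_norm_bounded (R.cbar_summable.mul_right _) fun Δ => abs_termL_le R hΦ hs Δ.1 η

lemma abs_FL_le (η : Conf d q) : |FL R Φ η| ≤ cbarSum R * (2 * pnorm Φ) :=
  tsum_of_norm_bounded (f := fun Δ : {Δ : Finset (Zd d) // 0 ∈ Δ} => termL R Φ Δ.1 η)
    (R.cbar_summable.hasSum.mul_right _) fun Δ => abs_termL_le R hΦ hs Δ.1 η

lemma continuous_FL : Continuous (FL R Φ) :=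
  continuous_tsum (fun Δ => continuous_termL R hΦ hs Δ.1) (R.cbar_summable.mul_right _)
    fun Δ η => abs_termL_le R hΦ hs Δ.1 η

lemma FL_add (hΨ : IsPotential Ψ) (hsΨ : PNormSummable Ψ) (η : Conf d q) :
    FL R (Φ + Ψ) η = FL R Φ η + FL R Ψ η := by
  rw [FL, FL, FL, ← (summable_termL R hΦ hs η).tsum_add (summable_termL R hΨ hsΨ η)]
  exact tsum_congr fun Δ => termL_add R hΦ hs hΨ hsΨ Δ.1 η

noncomputable def boundedFL : BoundedContinuousFunction (Conf d q) ℝ :=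
  .ofNormedAddCommGroup (FL R Φ) (continuous_FL R hΦ hs) _ (abs_FL_le R hΦ hs)

lemma pairingL_add (hΨ : IsPotential Ψ) (hsΨ : PNormSummable Ψ) (μ : Measure (Conf d q))
    [IsFiniteMeasure μ] : pairingL R (Φ + Ψ) μ = pairingL R Φ μ + pairingL R Ψ μ := by
  simp only [pairingL, FL_add R hΦ hs hΨ hsΨ]
  exact integral_add ((boundedFL R hΦ hs).integrable μ) ((boundedFL R hΨ hsΨ).integrable μ)

lemma abs_pairingL_le (μ : Measure (Conf d q)) [IsProbabilityMeasure μ] :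
    |pairingL R Φ μ| ≤ cbarSum R * (2 * pnorm Φ) := by
  simpa [pairingL] using norm_integral_le_of_norm_le_const (μ := μ) (f := FL R Φ)
    (.of_forall (abs_FL_le R hΦ hs))

end Pairing

theorem pairing_jointly_continuous_general
    (R : JumpRates d q)
    (νn : ℕ → ProbabilityMeasure (Conf d q)) (ν : ProbabilityMeasure (Conf d q))
    (hν : Tendsto νn atTop (𝓝 ν))
    (Φn : ℕ → Pot d q) (Φ : Pot d q)
    (hΦn : ∀ n, IsPotential (Φn n)) (hΦ : IsPotential Φ)
    (hΦsum : PNormSummable Φ)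
    (hdiffsum : ∀ n, PNormSummable (Φn n - Φ))
    (hconv : Tendsto (fun n => pnorm (Φn n - Φ)) atTop (𝓝 0)) :
    Tendsto (fun n => pairingL R (Φn n) (νn n : Measure (Conf d q))) atTop
      (𝓝 (pairingL R Φ (ν : Measure (Conf d q)))) := by
  have hdiff : ∀ n, IsPotential (Φn n - Φ) := fun n => (hΦn n).sub hΦ
  have hsplit : ∀ n, pairingL R (Φn n) (νn n : Measure (Conf d q))
      = pairingL R (Φn n - Φ) (νn n) + pairingL R Φ (νn n) := fun n => by
    rw [← pairingL_add R (hdiff n) (hdiffsum n) hΦ hΦsum, sub_add_cancel]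
  have hsmall : Tendsto (fun n => pairingL R (Φn n - Φ) (νn n)) atTop (𝓝 0) :=
    squeeze_zero_norm (fun n => abs_pairingL_le R (hdiff n) (hdiffsum n) _)
      (by simpa using (hconv.const_mul 2).const_mul (cbarSum R))
  have hweak : Tendsto (fun n => pairingL R Φ (νn n)) atTop (𝓝 (pairingL R Φ ν)) :=
    ProbabilityMeasure.tendsto_iff_forall_integral_tendsto.mp hν (boundedFL R hΦ hΦsum)
  simpa only [hsplit, zero_add] using hsmall.add hweak

/-- joint continuity of the pairing, from the proof of Theorem 2.4.
If `ν_n → ν` weakly and `‖Φ_n − Φ‖ → 0` with `‖Φ‖ < ∞`, then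
`⟨ν_n, Φ_n⟩_L → ⟨ν, Φ⟩_L`. -/
theorem pairing_jointly_continuous (hd : 1 ≤ d) (hq : 2 ≤ q)
    (R : JumpRates d q)
    (νn : ℕ → ProbabilityMeasure (Conf d q)) (ν : ProbabilityMeasure (Conf d q))
    (hν : Tendsto νn atTop (𝓝 ν))
    (Φn : ℕ → Pot d q) (Φ : Pot d q)
    (hΦn : ∀ n, IsPotential (Φn n)) (hΦ : IsPotential Φ)
    (hΦsum : PNormSummable Φ)
    (hdiffsum : ∀ n, PNormSummable (Φn n - Φ))
    (hconv : Tendsto (fun n => pnorm (Φn n - Φ)) atTop (𝓝 0)) :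
    Tendsto (fun n => pairingL R (Φn n) (νn n : Measure (Conf d q))) atTop
      (𝓝 (pairingL R Φ (ν : Measure (Conf d q)))) :=
  pairing_jointly_continuous_general R νn ν hν Φn Φ hΦn hΦ hΦsum hdiffsum hconv
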